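/- arXiv:0712.0379 — 2 statements merged into one kernel-verified Lean document; each statement's English description precedes it below -/
import Mathlib

section
/- Let m ≥ 1 be an integer such that p := 2m+1 is prime, and define G_m(t) = ∑_{l=1}^{2m+1} ∑_{i=0}^{l−1} ∑_{j=0}^{2m+1+i−l} ∑_{k=0}^{l−1−i} (−1)^{j+k+l} · C(2m+1,l) · Ch(−2m−1, j) · Ch(−2m−1, k) · Ch(2m−t, j+k+2m+1) · Ch(t, i−j−l+2m+1) · Ch(t, l−k−1−i) for integers t, where C(n,k) is the ordinary binomial coefficient and Ch(x,r) the generalized binomial coefficient. Then G_m(3m+1) is an integer and G_m(3m+1) ≡ 1 (mod p); in particular G_m(3m+1) ≠ 0. -/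
/-!
At `t = 3m + 1` every generalized binomial coefficient in `G_m(t)` is an integer binomial
coefficient up to sign: `Ch(-2m-1, j) = (-1)^j C(2m+j, j)`, `Ch(-m-1, r) = (-1)^r C(m+r, r)`
and `Ch(3m+1, r) = C(3m+1, r)`. Modulo the prime `p = 2m+1`, `C(p, l)` vanishes unless
`l = p`, and `C(2m+j, j)` vanishes for `0 < j < p`, so only the terms with `l = p`, `j = k = 0`
survive. By Lucas' theorem `C(m+p, p) ≡ 1`, and what remains is the Vandermonde sum
`∑ i, C(3m+1, i) C(3m+1, 2m-i) = C(6m+2, 2m) = C(2m + 2p, 2m) ≡ 1`.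
-/

open Finset

/-- Generalized binomial coefficient `Ch(x,r) = x(x-1)⋯(x-r+1)/r!`. -/
def gch (x : ℚ) (r : ℕ) : ℚ :=
  (∏ j ∈ Finset.range r, (x - (j : ℚ))) / (Nat.factorial r : ℚ)

/-- The quadruple sum `G_m(t)` from the Appendix. -/
def Gfun (m : ℕ) (t : ℚ) : ℚ :=
  ∑ l ∈ Finset.Icc 1 (2 * m + 1), ∑ i ∈ Finset.range l,
    ∑ j ∈ Finset.range (2 * m + 1 + i - l + 1), ∑ k ∈ Finset.range (l - i),
      (-1 : ℚ) ^ (j + k + l) * (Nat.choose (2 * m + 1) l : ℚ)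
        * gch (-(2 * (m : ℚ) + 1)) j * gch (-(2 * (m : ℚ) + 1)) k
        * gch (2 * (m : ℚ) - t) (j + k + 2 * m + 1)
        * gch t (i + 2 * m + 1 - j - l) * gch t (l - k - 1 - i)

lemma gch_eq_ringChoose (x : ℚ) (r : ℕ) : gch x r = Ring.choose x r := by
  rw [gch, Ring.choose_eq_smul, ← descPochhammer_eval_eq_prod_range, smul_eq_mul,
    ← Polynomial.aeval_eq_smeval, Polynomial.aeval_def, Polynomial.eval₂_eq_eval_map,
    descPochhammer_map, div_eq_inv_mul]

lemma gch_natCast (n r : ℕ) : gch n r = n.choose r := by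
  rw [gch_eq_ringChoose, Ring.choose_natCast]

lemma gch_neg_natCast_sub_one (n r : ℕ) : gch (-n - 1) r = (-1) ^ r * (n + r).choose r := by
  rw [gch_eq_ringChoose, neg_sub_left, Ring.choose_neg,
    show (1 + n : ℚ) + r - 1 = ((n + r : ℕ) : ℚ) by push_cast; ring, Ring.choose_natCast,
    Units.smul_def, Int.negOnePow_def]
  simp

def Gint (m : ℕ) : ℤ :=
  ∑ l ∈ Icc 1 (2 * m + 1), ∑ i ∈ range l,
    ∑ j ∈ range (2 * m + 1 + i - l + 1), ∑ k ∈ range (l - i),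
      (-1) ^ (j + k + l) * ((2 * m + 1).choose l : ℤ)
        * ((-1) ^ j * (2 * m + j).choose j) * ((-1) ^ k * (2 * m + k).choose k)
        * ((-1) ^ (j + k + 2 * m + 1) * (m + (j + k + 2 * m + 1)).choose (j + k + 2 * m + 1))
        * (3 * m + 1).choose (i + 2 * m + 1 - j - l) * (3 * m + 1).choose (l - k - 1 - i)

lemma Gfun_three_mul_add_one (m : ℕ) : Gfun m (3 * m + 1) = Gint m := by
  have h₁ : -(2 * (m : ℚ) + 1) = -((2 * m : ℕ) : ℚ) - 1 := by push_cast; ring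
  have h₂ : 2 * (m : ℚ) - ((3 * m + 1 : ℕ) : ℚ) = -(m : ℚ) - 1 := by push_cast; ring
  have h₃ : 3 * (m : ℚ) + 1 = ((3 * m + 1 : ℕ) : ℚ) := by push_cast; ring
  rw [Gint]
  push_cast
  simp only [Gfun, h₁, h₃, h₂, gch_neg_natCast_sub_one, gch_natCast]

lemma ZMod.natCast_choose_add_mul {p a k : ℕ} [Fact p.Prime] (ha : a < p) (hk : k < p)
    (b c : ℕ) : (((a + p * b).choose (k + p * c) : ℕ) : ZMod p) = a.choose k * b.choose c := by
  have h := (ZMod.natCast_eq_natCast_iff _ _ _).mpr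
    (Choose.choose_modEq_choose_mod_mul_choose_div_nat (n := a + p * b) (k := k + p * c) (p := p))
  have hp : 0 < p := (Fact.out : p.Prime).pos
  rwa [Nat.add_mul_mod_self_left, Nat.add_mul_mod_self_left, Nat.mod_eq_of_lt ha,
    Nat.mod_eq_of_lt hk, Nat.add_mul_div_left _ _ hp, Nat.add_mul_div_left _ _ hp,
    Nat.div_eq_of_lt ha, Nat.div_eq_of_lt hk, zero_add, zero_add, Nat.cast_mul] at h

lemma ZMod.natCast_choose_add_eq_zero {n j : ℕ} (hp : (n + 1).Prime) (hj₀ : 0 < j)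
    (hj : j ≤ n) : (((n + j).choose j : ℕ) : ZMod (n + 1)) = 0 := by
  rw [ZMod.natCast_eq_zero_iff, add_comm n j]
  exact hp.dvd_choose_add (a := j) (b := n) (by omega) (by omega) (by omega)

lemma Gint_cast_zmod_eq_mul_sum {m : ℕ} (hp : (2 * m + 1).Prime) :
    (Gint m : ZMod (2 * m + 1)) = ((m + (2 * m + 1)).choose (2 * m + 1) : ℕ) *
      ∑ i ∈ range (2 * m + 1), (((3 * m + 1).choose i * (3 * m + 1).choose (2 * m - i) : ℕ) :
        ZMod (2 * m + 1)) := by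
  have hC := fun j => ZMod.natCast_choose_add_eq_zero (j := j) hp
  rw [Gint, mul_sum]
  push_cast
  rw [sum_eq_single_of_mem (2 * m + 1) (by simp)]
  · refine sum_congr rfl fun i hi => ?_
    rw [mem_range] at hi
    rw [sum_eq_single_of_mem 0 (by simp), sum_eq_single_of_mem 0 (by simp [hi])]
    · simp only [add_zero, zero_add, Nat.choose_zero_right, Nat.choose_self]
      rw [show i + 2 * m + 1 - 0 - (2 * m + 1) = i by omega,
        show 2 * m + 1 - 0 - 1 - i = 2 * m - i by omega, Odd.neg_one_pow ⟨m, rfl⟩]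
      push_cast
      ring
    · intro k hk hk₀
      rw [mem_range] at hk
      rw [hC k (by omega) (by omega)]
      ring
    · intro j hj hj₀
      rw [mem_range] at hj
      refine sum_eq_zero fun k _ => ?_
      rw [hC j (by omega) (by omega)]
      ring
  · intro l hl hlp
    rw [mem_Icc] at hl
    have : (((2 * m + 1).choose l : ℕ) : ZMod (2 * m + 1)) = 0 := by
      rw [ZMod.natCast_eq_zero_iff]
      exact hp.dvd_choose_self (by omega) (by omega)
    simp [this]

lemma Gint_cast_zmod_eq_one {m : ℕ} (hp : (2 * m + 1).Prime) :
    (Gint m : ZMod (2 * m + 1)) = 1 := by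
  have : Fact (2 * m + 1).Prime := ⟨hp⟩
  have hvandermonde :
      ∑ i ∈ range (2 * m + 1), (3 * m + 1).choose i * (3 * m + 1).choose (2 * m - i) =
        ((3 * m + 1) + (3 * m + 1)).choose (2 * m) := by
    rw [Nat.add_choose_eq, Nat.sum_antidiagonal_eq_sum_range_succ_mk]
  have hlucas₁ : (((m + (2 * m + 1)).choose (2 * m + 1) : ℕ) : ZMod (2 * m + 1)) = 1 := by
    simpa using
      ZMod.natCast_choose_add_mul (p := 2 * m + 1) (a := m) (k := 0) (by omega) (by omega) 1 1
  have hlucas₂ : ((((3 * m + 1) + (3 * m + 1)).choose (2 * m) : ℕ) : ZMod (2 * m + 1)) = 1 := by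
    simpa [show 2 * m + (2 * m + 1) * 2 = (3 * m + 1) + (3 * m + 1) by ring] using
      ZMod.natCast_choose_add_mul (p := 2 * m + 1) (a := 2 * m) (k := 2 * m)
        (by omega) (by omega) 2 0
  rw [Gint_cast_zmod_eq_mul_sum hp, ← Nat.cast_sum, hvandermonde, hlucas₁, hlucas₂, one_mul]

theorem stmt_9_general (m : ℕ) (hp : Nat.Prime (2 * m + 1)) :
    ∃ g : ℤ, Gfun m (3 * m + 1) = (g : ℚ)
      ∧ g ≡ 1 [ZMOD (2 * m + 1 : ℤ)] ∧ g ≠ 0 := by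
  have : Fact (2 * m + 1).Prime := ⟨hp⟩
  have hG := Gint_cast_zmod_eq_one hp
  refine ⟨Gint m, Gfun_three_mul_add_one m, ?_, ?_⟩
  · rw [← Int.cast_one, ZMod.intCast_eq_intCast_iff] at hG
    exact_mod_cast hG
  · rintro h
    simp [h] at hG

/-- if `2m+1` is prime then `G_m(3m+1)` is an integer congruent to `1`
mod `2m+1`; in particular it is nonzero. -/
theorem stmt_9 (m : ℕ) (hm : 1 ≤ m) (hp : Nat.Prime (2 * m + 1)) :
    ∃ g : ℤ, Gfun m (3 * m + 1) = (g : ℚ)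
      ∧ g ≡ 1 [ZMOD (2 * m + 1 : ℤ)] ∧ g ≠ 0 :=
  stmt_9_general m hp
end

section
/- Let k be a nonnegative integer. For every real number x with 0 < x < 1, 1 / ∏_{n=1}^{∞} (1 − x^{n}) = ∑_{n=0}^{∞} x^{n²+kn} / ( (x; x)_n · (x; x)_{n+k} ) = ∑_{n=0}^{∞} (−x; x)_n · (−x; x)_{n+k} · x^{n²+kn} / ( (x²; x²)_n · (x²; x²)_{n+k} ), where all series and the product converge absolutely (Durfee rectangle identities, with x = q^{1/2}). -/
/-!
Write `[n, k]` for the Gaussian binomial coefficient in `x`. The q-Vandermonde identity with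
parameters `(M + k, M, M)` gives the finite Durfee rectangle identity
`[2M + k, M] = ∑_{j ≤ M} x^{j² + kj} [M, j] [M + k, M - j]`. As `M → ∞` the left side tends to
`(x;x)_∞ / (x;x)_∞² = 1 / (x;x)_∞` and the `j`-th term to `x^{j² + kj} / ((x;x)_j (x;x)_{j+k})`;
since every `[n, k]` is at most `1 / (x;x)_∞`, the terms are dominated by a geometric series and
Tannery's theorem lets us pass to the limit under the sum. The second series agrees with the first
termwise because `(x²;x²)_n = (x;x)_n (-x;x)_n`.
-/

open Finset

/-- q-Pochhammer symbol `(a; x)_n = ∏_{j=0}^{n-1} (1 - a x^j)`. -/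
def qPoch (a x : ℝ) (n : ℕ) : ℝ :=
  ∏ j ∈ Finset.range n, (1 - a * x ^ j)

open Filter Topology

variable {x : ℝ}

lemma qPoch_self (x : ℝ) (n : ℕ) : qPoch x x n = ∏ j ∈ range n, (1 - x ^ (j + 1)) := by
  simp only [qPoch, pow_succ']

lemma qPoch_self_succ (x : ℝ) (n : ℕ) : qPoch x x (n + 1) = qPoch x x n * (1 - x ^ (n + 1)) := by
  rw [qPoch_self, qPoch_self, prod_range_succ]

lemma one_sub_pow_succ_pos (hx₀ : 0 ≤ x) (hx₁ : x < 1) (n : ℕ) : 0 < 1 - x ^ (n + 1) :=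
  sub_pos.2 (pow_lt_one₀ hx₀ hx₁ n.succ_ne_zero)

lemma qPoch_self_pos (hx₀ : 0 ≤ x) (hx₁ : x < 1) (n : ℕ) : 0 < qPoch x x n := by
  rw [qPoch_self]
  exact prod_pos fun j _ => one_sub_pow_succ_pos hx₀ hx₁ j

lemma antitone_qPoch_self (hx₀ : 0 ≤ x) (hx₁ : x < 1) : Antitone (qPoch x x) := by
  refine antitone_nat_of_succ_le fun n => ?_
  rw [qPoch_self_succ]
  exact mul_le_of_le_one_right (qPoch_self_pos hx₀ hx₁ n).le
    (sub_le_self _ (pow_nonneg hx₀ _))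

lemma hasProd_one_sub_pow (hx₀ : 0 ≤ x) (hx₁ : x < 1) :
    HasProd (fun n => 1 - x ^ (n + 1)) (Real.exp (∑' n, Real.log (1 - x ^ (n + 1)))) := by
  refine Real.hasProd_of_hasSum_log (one_sub_pow_succ_pos hx₀ hx₁) (Summable.hasSum ?_)
  have hgeom : Summable fun n : ℕ => -x ^ (n + 1) :=
    ((summable_geometric_of_lt_one hx₀ hx₁).mul_left x).neg.congr fun n => by rw [pow_succ']
  simpa only [sub_eq_add_neg] using Real.summable_log_one_add_of_summable hgeom

lemma tprod_one_sub_pow_pos (hx₀ : 0 ≤ x) (hx₁ : x < 1) : 0 < ∏' n, (1 - x ^ (n + 1)) :=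
  (hasProd_one_sub_pow hx₀ hx₁).tprod_eq ▸ Real.exp_pos _

lemma tendsto_qPoch_self (hx₀ : 0 ≤ x) (hx₁ : x < 1) :
    Tendsto (qPoch x x) atTop (𝓝 (∏' n, (1 - x ^ (n + 1)))) := by
  have h := (hasProd_one_sub_pow hx₀ hx₁).multipliable.hasProd.tendsto_prod_nat
  simpa only [← qPoch_self] using h

lemma tprod_one_sub_pow_le_qPoch (hx₀ : 0 ≤ x) (hx₁ : x < 1) (n : ℕ) :
    ∏' n, (1 - x ^ (n + 1)) ≤ qPoch x x n :=
  (antitone_qPoch_self hx₀ hx₁).le_of_tendsto (tendsto_qPoch_self hx₀ hx₁) n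

lemma qPoch_sq_sq (x : ℝ) (n : ℕ) : qPoch (x ^ 2) (x ^ 2) n = qPoch x x n * qPoch (-x) x n := by
  simp only [qPoch, ← prod_mul_distrib]
  refine prod_congr rfl fun j _ => by ring

lemma qPoch_neg_self_pos (hx₀ : 0 ≤ x) (n : ℕ) : 0 < qPoch (-x) x n :=
  prod_pos fun j _ => by nlinarith [pow_nonneg hx₀ j, mul_nonneg hx₀ (pow_nonneg hx₀ j)]

-- The Gaussian binomial coefficient `[n, k]`, through the q-Pascal rule.
def qBinom (x : ℝ) : ℕ → ℕ → ℝ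
  | _, 0 => 1
  | 0, _ + 1 => 0
  | n + 1, k + 1 => qBinom x n k + x ^ (k + 1) * qBinom x n (k + 1)

@[simp] lemma qBinom_zero_right (x : ℝ) (n : ℕ) : qBinom x n 0 = 1 := by cases n <;> rfl

@[simp] lemma qBinom_zero_succ (x : ℝ) (k : ℕ) : qBinom x 0 (k + 1) = 0 := rfl

lemma qBinom_succ_succ (x : ℝ) (n k : ℕ) :
    qBinom x (n + 1) (k + 1) = qBinom x n k + x ^ (k + 1) * qBinom x n (k + 1) := rfl

lemma qBinom_eq_zero_of_lt (x : ℝ) {n k : ℕ} (h : n < k) : qBinom x n k = 0 := by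
  induction n generalizing k with
  | zero => obtain ⟨k, rfl⟩ := Nat.exists_eq_succ_of_ne_zero h.ne'; rfl
  | succ n ih =>
    obtain ⟨k, rfl⟩ := Nat.exists_eq_succ_of_ne_zero (by omega : k ≠ 0)
    rw [qBinom_succ_succ, ih (by omega), ih (by omega), mul_zero, add_zero]

lemma qBinom_nonneg (hx : 0 ≤ x) (n k : ℕ) : 0 ≤ qBinom x n k := by
  induction n generalizing k with
  | zero => cases k <;> simp
  | succ n ih =>
    cases k with
    | zero => simp
    | succ k => rw [qBinom_succ_succ]; have := ih k; have := ih (k + 1); positivity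

lemma qBinom_mul_qPoch (x : ℝ) {n k : ℕ} (h : k ≤ n) :
    qBinom x n k * (qPoch x x k * qPoch x x (n - k)) = qPoch x x n := by
  induction n generalizing k with
  | zero =>
    obtain rfl : k = 0 := by omega
    simp [qPoch]
  | succ n ih =>
    cases k with
    | zero => simp [qPoch]
    | succ k =>
      rcases (by omega : k = n ∨ k + 1 ≤ n) with rfl | hk
      · have := ih le_rfl
        rw [qBinom_succ_succ, qBinom_eq_zero_of_lt x (Nat.lt_succ_self k), qPoch_self_succ x k]
        simp only [Nat.sub_self] at this ⊢
        linear_combination (1 - x ^ (k + 1)) * this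
      · obtain ⟨d, rfl⟩ := Nat.exists_eq_add_of_le hk
        have h₁ := ih (k := k) (by omega)
        have h₂ := ih (k := k + 1) (by omega)
        rw [show k + 1 + d - k = d + 1 by omega] at h₁
        rw [show k + 1 + d - (k + 1) = d by omega] at h₂
        rw [show k + 1 + d + 1 - (k + 1) = d + 1 by omega, qBinom_succ_succ, qPoch_self_succ x k,
          qPoch_self_succ x (k + 1 + d), qPoch_self_succ x d] at *
        linear_combination (1 - x ^ (k + 1)) * h₁ + x ^ (k + 1) * (1 - x ^ (d + 1)) * h₂

theorem qBinom_add_eq (x : ℝ) (a b c : ℕ) :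
    qBinom x (a + b) c =
      ∑ p ∈ antidiagonal c, qBinom x a p.1 * qBinom x b p.2 * x ^ (p.2 * (a - p.1)) := by
  induction a generalizing c with
  | zero =>
    cases c with
    | zero => simp
    | succ c => simp [Nat.sum_antidiagonal_succ]
  | succ a ih =>
    cases c with
    | zero => simp
    | succ c =>
      have hshift : ∀ p ∈ antidiagonal c,
          x ^ (p.1 + 1) * qBinom x a (p.1 + 1) * x ^ (p.2 * (a - p.1))
            = x ^ (c + 1) * qBinom x a (p.1 + 1) * x ^ (p.2 * (a - (p.1 + 1))) := by
        intro p hp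
        rw [HasAntidiagonal.mem_antidiagonal] at hp
        rcases lt_or_ge a (p.1 + 1) with ha | ha
        · simp [qBinom_eq_zero_of_lt x ha]
        · obtain ⟨d, rfl⟩ := Nat.exists_eq_add_of_le ha
          rw [← hp, show p.1 + 1 + d - p.1 = d + 1 by omega, Nat.add_sub_cancel_left]
          ring
      have hsplit : ∑ p ∈ antidiagonal c,
          (qBinom x a p.1 + x ^ (p.1 + 1) * qBinom x a (p.1 + 1)) * qBinom x b p.2
            * x ^ (p.2 * (a - p.1))
          = ∑ p ∈ antidiagonal c, qBinom x a p.1 * qBinom x b p.2 * x ^ (p.2 * (a - p.1))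
            + x ^ (c + 1) * ∑ p ∈ antidiagonal c,
              qBinom x a (p.1 + 1) * qBinom x b p.2 * x ^ (p.2 * (a - (p.1 + 1))) := by
        rw [mul_sum, ← sum_add_distrib]
        exact sum_congr rfl fun p hp => by linear_combination qBinom x b p.2 * hshift p hp
      rw [Nat.add_right_comm, qBinom_succ_succ, ih, ih, Nat.sum_antidiagonal_succ,
        Nat.sum_antidiagonal_succ]
      simp only [qBinom_succ_succ, Nat.add_sub_add_right, qBinom_zero_right, hsplit,
        Nat.sub_zero]
      ring

-- For `j > M` the truncated `M - j` does no harm, since then `qBinom x M j = 0`.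
def durfeeTerm (x : ℝ) (k M j : ℕ) : ℝ :=
  x ^ (j ^ 2 + k * j) * qBinom x M j * qBinom x (M + k) (M - j)

theorem qBinom_eq_sum_durfeeTerm (x : ℝ) (k M : ℕ) :
    qBinom x (M + k + M) M = ∑ j ∈ range (M + 1), durfeeTerm x k M j := by
  rw [qBinom_add_eq, ← Nat.sum_antidiagonal_swap, Nat.sum_antidiagonal_eq_sum_range_succ_mk]
  refine sum_congr rfl fun j hj => ?_
  rw [mem_range] at hj
  simp only [Prod.swap, durfeeTerm, show M + k - (M - j) = j + k by omega]
  ring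

lemma tsum_durfeeTerm (x : ℝ) (k M : ℕ) :
    ∑' j, durfeeTerm x k M j = qBinom x (M + k + M) M := by
  rw [qBinom_eq_sum_durfeeTerm, tsum_eq_sum]
  intro j hj
  rw [mem_range, not_lt] at hj
  rw [durfeeTerm, qBinom_eq_zero_of_lt x hj, mul_zero, zero_mul]

lemma qBinom_eq_div (hx₀ : 0 ≤ x) (hx₁ : x < 1) {n k : ℕ} (h : k ≤ n) :
    qBinom x n k = qPoch x x n / (qPoch x x k * qPoch x x (n - k)) := by
  have := qPoch_self_pos hx₀ hx₁ k
  have := qPoch_self_pos hx₀ hx₁ (n - k)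
  rw [← qBinom_mul_qPoch x h, mul_div_cancel_right₀ _ (by positivity)]

lemma qBinom_le_inv_qPoch (hx₀ : 0 ≤ x) (hx₁ : x < 1) (n k : ℕ) :
    qBinom x n k ≤ (qPoch x x k)⁻¹ := by
  have hk := qPoch_self_pos hx₀ hx₁ k
  rcases le_or_gt k n with h | h
  · have hnk := qPoch_self_pos hx₀ hx₁ (n - k)
    calc qBinom x n k ≤ qPoch x x (n - k) / (qPoch x x k * qPoch x x (n - k)) := by
          rw [qBinom_eq_div hx₀ hx₁ h]
          gcongr
          exact antitone_qPoch_self hx₀ hx₁ (Nat.sub_le n k)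
      _ = (qPoch x x k)⁻¹ := by field_simp
  · rw [qBinom_eq_zero_of_lt x h]
    positivity

lemma durfeeTerm_nonneg (hx₀ : 0 ≤ x) (k M j : ℕ) : 0 ≤ durfeeTerm x k M j := by
  have := qBinom_nonneg hx₀ M j
  have := qBinom_nonneg hx₀ (M + k) (M - j)
  unfold durfeeTerm
  positivity

lemma durfeeTerm_le (hx₀ : 0 ≤ x) (hx₁ : x < 1) (k M j : ℕ) :
    durfeeTerm x k M j ≤ x ^ j * ((∏' n, (1 - x ^ (n + 1)))⁻¹ * (∏' n, (1 - x ^ (n + 1)))⁻¹) := by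
  have hP := tprod_one_sub_pow_pos hx₀ hx₁
  have hbound : ∀ n i, qBinom x n i ≤ (∏' n, (1 - x ^ (n + 1)))⁻¹ := fun n i =>
    (qBinom_le_inv_qPoch hx₀ hx₁ n i).trans
      (inv_anti₀ hP (tprod_one_sub_pow_le_qPoch hx₀ hx₁ i))
  have hpow : x ^ (j ^ 2 + k * j) ≤ x ^ j :=
    pow_le_pow_of_le_one hx₀ hx₁.le ((Nat.le_self_pow two_ne_zero j).trans (Nat.le_add_right _ _))
  rw [durfeeTerm, mul_assoc]
  exact mul_le_mul hpow (mul_le_mul (hbound _ _) (hbound _ _) (qBinom_nonneg hx₀ _ _)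
    (inv_nonneg.2 hP.le)) (mul_nonneg (qBinom_nonneg hx₀ _ _) (qBinom_nonneg hx₀ _ _))
    (pow_nonneg hx₀ j)

lemma tendsto_durfeeTerm (hx₀ : 0 ≤ x) (hx₁ : x < 1) (k j : ℕ) :
    Tendsto (fun M => durfeeTerm x k M j) atTop
      (𝓝 (x ^ (j ^ 2 + k * j) / (qPoch x x j * qPoch x x (j + k)))) := by
  have hq := tendsto_qPoch_self hx₀ hx₁
  have hP := (tprod_one_sub_pow_pos hx₀ hx₁).ne'
  have hj := (qPoch_self_pos hx₀ hx₁ j).ne'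
  have hjk := (qPoch_self_pos hx₀ hx₁ (j + k)).ne'
  have hsub := hq.comp (tendsto_sub_atTop_nat j)
  have hlim := (tendsto_const_nhds (x := x ^ (j ^ 2 + k * j))).mul
    (hq.div (tendsto_const_nhds.mul hsub) (mul_ne_zero hj hP)) |>.mul
    ((hq.comp (tendsto_add_atTop_nat k)).div (hsub.mul tendsto_const_nhds) (mul_ne_zero hP hjk))
  refine (hlim.congr' ?_).trans_eq (by field_simp)
  filter_upwards [eventually_ge_atTop j] with M hM
  simp only [Function.comp_apply, Pi.div_apply, durfeeTerm]
  rw [qBinom_eq_div hx₀ hx₁ hM, qBinom_eq_div hx₀ hx₁ (by omega : M - j ≤ M + k),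
    show M + k - (M - j) = j + k by omega]

lemma tendsto_qBinom_add_self (hx₀ : 0 ≤ x) (hx₁ : x < 1) (k : ℕ) :
    Tendsto (fun M => qBinom x (M + k + M) M) atTop (𝓝 (∏' n, (1 - x ^ (n + 1)))⁻¹) := by
  have hq := tendsto_qPoch_self hx₀ hx₁
  have hP := (tprod_one_sub_pow_pos hx₀ hx₁).ne'
  have hlim := (hq.comp (tendsto_atTop_mono (fun M => Nat.le_add_left M (M + k)) tendsto_id)).div
    (hq.mul (hq.comp (tendsto_add_atTop_nat k))) (mul_ne_zero hP hP)
  refine (hlim.congr fun M => ?_).trans_eq (by field_simp)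
  simp only [Function.comp_apply, Pi.div_apply]
  rw [qBinom_eq_div hx₀ hx₁ (by omega), show M + k + M - M = M + k by omega]

theorem hasSum_durfee (hx₀ : 0 ≤ x) (hx₁ : x < 1) (k : ℕ) :
    HasSum (fun n => x ^ (n ^ 2 + k * n) / (qPoch x x n * qPoch x x (n + k)))
      (∏' n, (1 - x ^ (n + 1)))⁻¹ := by
  have hbound := durfeeTerm_le hx₀ hx₁ k
  have hgeom := (summable_geometric_of_lt_one hx₀ hx₁).mul_right
    ((∏' n, (1 - x ^ (n + 1)))⁻¹ * (∏' n, (1 - x ^ (n + 1)))⁻¹)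
  have hsum : Summable fun n => x ^ (n ^ 2 + k * n) / (qPoch x x n * qPoch x x (n + k)) :=
    hgeom.of_nonneg_of_le
      (fun j => ge_of_tendsto' (tendsto_durfeeTerm hx₀ hx₁ k j)
        fun M => durfeeTerm_nonneg hx₀ k M j)
      (fun j => le_of_tendsto' (tendsto_durfeeTerm hx₀ hx₁ k j) fun M => hbound M j)
  have hlim := tendsto_tsum_of_dominated_convergence hgeom (tendsto_durfeeTerm hx₀ hx₁ k)
    (Eventually.of_forall fun M j => by
      rw [Real.norm_of_nonneg (durfeeTerm_nonneg hx₀ k M j)]; exact hbound M j)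
  simp only [tsum_durfeeTerm] at hlim
  rw [tendsto_nhds_unique (tendsto_qBinom_add_self hx₀ hx₁ k) hlim]
  exact hsum.hasSum

lemma qPoch_neg_mul_div_qPoch_sq (hx : 0 ≤ x) (y : ℝ) (m n : ℕ) :
    qPoch (-x) x m * qPoch (-x) x n * y / (qPoch (x ^ 2) (x ^ 2) m * qPoch (x ^ 2) (x ^ 2) n)
      = y / (qPoch x x m * qPoch x x n) := by
  have hm := (qPoch_neg_self_pos hx m).ne'
  have hn := (qPoch_neg_self_pos hx n).ne'
  rw [qPoch_sq_sq, qPoch_sq_sq, mul_mul_mul_comm, mul_comm (qPoch x x m * qPoch x x n),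
    mul_div_mul_left _ _ (mul_ne_zero hm hn)]

/-- Durfee rectangle identities: for `0 < x < 1` and `k ∈ ℕ`,
`1/∏_{n≥1}(1-x^n) = ∑_{n≥0} x^{n²+kn}/((x;x)_n (x;x)_{n+k})
                  = ∑_{n≥0} (−x;x)_n (−x;x)_{n+k} x^{n²+kn}/((x²;x²)_n (x²;x²)_{n+k})`,
with absolute convergence of the product and both series. -/
theorem stmt_17 (k : ℕ) (x : ℝ) (h0 : 0 < x) (h1 : x < 1) :
    Multipliable (fun n : ℕ => 1 - x ^ (n + 1))
      ∧ Summable (fun n : ℕ =>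
          x ^ (n ^ 2 + k * n) / (qPoch x x n * qPoch x x (n + k)))
      ∧ Summable (fun n : ℕ =>
          qPoch (-x) x n * qPoch (-x) x (n + k) * x ^ (n ^ 2 + k * n)
            / (qPoch (x ^ 2) (x ^ 2) n * qPoch (x ^ 2) (x ^ 2) (n + k)))
      ∧ 1 / (∏' n : ℕ, (1 - x ^ (n + 1)))
          = ∑' n : ℕ, x ^ (n ^ 2 + k * n) / (qPoch x x n * qPoch x x (n + k))
      ∧ 1 / (∏' n : ℕ, (1 - x ^ (n + 1)))
          = ∑' n : ℕ, qPoch (-x) x n * qPoch (-x) x (n + k) * x ^ (n ^ 2 + k * n)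
              / (qPoch (x ^ 2) (x ^ 2) n * qPoch (x ^ 2) (x ^ 2) (n + k)) := by
  have hsum := hasSum_durfee h0.le h1 k
  simp_rw [qPoch_neg_mul_div_qPoch_sq h0.le]
  rw [one_div, hsum.tsum_eq]
  exact ⟨(hasProd_one_sub_pow h0.le h1).multipliable, hsum.summable, hsum.summable, rfl, rfl⟩
end
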